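/- Let n ≥ 1 and let u, v : Fin (n+2) → ℝ. Any 2-plane in Minkowski space has at most two null directions: if w₁, w₂, w₃ are nonzero null vectors lying in span{u,v}, then at least two of w₁, w₂, w₃ are scalar multiples of each other. -/
import Mathlib


open Finset

/-- The Minkowski signature factor: `ε 0 = 1`, `ε i = −1` for `i ≠ 0`. -/
noncomputable def eps {n : ℕ} (i : Fin (n + 2)) : ℝ := if i = 0 then 1 else -1

/-- The Minkowski bilinear form `⟨x,y⟩ = x 0 * y 0 − Σ_{a=1}^{n+1} x a * y a` on ℝ^{n+2}. -/
noncomputable def mink {n : ℕ} (x y : Fin (n + 2) → ℝ) : ℝ :=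
  ∑ i, eps i * x i * y i

lemma mink_expand {n : ℕ} (a b c d : ℝ) (x y : Fin (n + 2) → ℝ) :
    mink (a • x + b • y) (c • x + d • y)
      = a * c * mink x x + (a * d + b * c) * mink x y + b * d * mink y y := by
  simp only [mink, Pi.add_apply, Pi.smul_apply, smul_eq_mul, Finset.mul_sum,
    ← Finset.sum_add_distrib]
  apply Finset.sum_congr rfl
  intro i _
  ring

lemma null_time_zero {n : ℕ} (x : Fin (n + 2) → ℝ) (h0 : x 0 = 0) (hx : mink x x = 0) :
    x = 0 := by
  have hterm : ∀ i : Fin (n + 2), eps i * x i * x i = -(x i ^ 2) := by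
    intro i
    by_cases hi : i = 0
    · subst hi; simp [eps, h0]
    · simp [eps, hi]; ring
  have hsum : ∑ i, x i ^ 2 = 0 := by
    have : ∑ i, eps i * x i * x i = -∑ i, x i ^ 2 := by
      rw [← Finset.sum_neg_distrib]
      exact Finset.sum_congr rfl fun i _ => hterm i
    rw [mink, this] at hx
    linarith
  funext i
  have := (Finset.sum_eq_zero_iff_of_nonneg (fun i _ => sq_nonneg (x i))).mp hsum i
    (Finset.mem_univ i)
  exact pow_eq_zero_iff (by norm_num) |>.mp this

lemma det_zero_prop (a₁ b₁ a₂ b₂ : ℝ) (h : a₁ * b₂ - a₂ * b₁ = 0)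
    (hne : a₁ ≠ 0 ∨ b₁ ≠ 0) : ∃ c, a₂ = c * a₁ ∧ b₂ = c * b₁ := by
  rcases hne with ha | hb
  · exact ⟨a₂ / a₁, by field_simp, by field_simp; nlinarith⟩
  · exact ⟨b₂ / b₁, by field_simp; nlinarith, by field_simp⟩

/-- A 2-plane in Minkowski space has at most two null directions: among three nonzero null
vectors in `span{u,v}`, at least two are parallel. -/
theorem at_most_two_null_directions (n : ℕ) (hn : 1 ≤ n) (u v : Fin (n + 2) → ℝ)
    (w₁ w₂ w₃ : Fin (n + 2) → ℝ)
    (h₁ : w₁ ∈ Submodule.span ℝ {u, v}) (h₂ : w₂ ∈ Submodule.span ℝ {u, v})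
    (h₃ : w₃ ∈ Submodule.span ℝ {u, v})
    (hw₁ : w₁ ≠ 0) (hw₂ : w₂ ≠ 0) (hw₃ : w₃ ≠ 0)
    (hn₁ : mink w₁ w₁ = 0) (hn₂ : mink w₂ w₂ = 0) (hn₃ : mink w₃ w₃ = 0) :
    (∃ c : ℝ, w₂ = c • w₁) ∨ (∃ c : ℝ, w₃ = c • w₁) ∨ (∃ c : ℝ, w₃ = c • w₂) := by
  by_contra hcon
  push_neg at hcon
  obtain ⟨hc12, hc13, hc23⟩ := hcon
  obtain ⟨a₁, b₁, hr₁⟩ := Submodule.mem_span_pair.mp h₁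
  obtain ⟨a₂, b₂, hr₂⟩ := Submodule.mem_span_pair.mp h₂
  obtain ⟨a₃, b₃, hr₃⟩ := Submodule.mem_span_pair.mp h₃
  subst hr₁; subst hr₂; subst hr₃
  rw [mink_expand] at hn₁ hn₂ hn₃
  -- the coefficient pairs are nonzero
  have hp₁ : a₁ ≠ 0 ∨ b₁ ≠ 0 := by
    by_contra h; push_neg at h
    exact hw₁ (by simp [h.1, h.2])
  have hp₂ : a₂ ≠ 0 ∨ b₂ ≠ 0 := by
    by_contra h; push_neg at h
    exact hw₂ (by simp [h.1, h.2])
  -- determinants are nonzero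
  have hd12 : a₁ * b₂ - a₂ * b₁ ≠ 0 := by
    intro hd
    obtain ⟨c, hc, hc'⟩ := det_zero_prop a₁ b₁ a₂ b₂ hd hp₁
    exact hc12 c (by rw [hc, hc', smul_add, smul_smul, smul_smul])
  have hd13 : a₁ * b₃ - a₃ * b₁ ≠ 0 := by
    intro hd
    obtain ⟨c, hc, hc'⟩ := det_zero_prop a₁ b₁ a₃ b₃ hd hp₁
    exact hc13 c (by rw [hc, hc', smul_add, smul_smul, smul_smul])
  have hd23 : a₂ * b₃ - a₃ * b₂ ≠ 0 := by
    intro hd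
    obtain ⟨c, hc, hc'⟩ := det_zero_prop a₂ b₂ a₃ b₃ hd hp₂
    exact hc23 c (by rw [hc, hc', smul_add, smul_smul, smul_smul])
  -- the polar form of w₁, w₂ vanishes
  have key : 2 * (a₃ * b₂ - a₂ * b₃) * (a₁ * b₃ - a₃ * b₁) *
      (a₁ * a₂ * mink u u + (a₁ * b₂ + a₂ * b₁) * mink u v + b₁ * b₂ * mink v v) = 0 := by
    linear_combination (a₁ * b₂ - a₂ * b₁) ^ 2 * hn₃ - (a₃ * b₂ - a₂ * b₃) ^ 2 * hn₁
      - (a₁ * b₃ - a₃ * b₁) ^ 2 * hn₂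
  have h32 : a₃ * b₂ - a₂ * b₃ ≠ 0 := fun h => hd23 (by linarith)
  have hP : a₁ * a₂ * mink u u + (a₁ * b₂ + a₂ * b₁) * mink u v + b₁ * b₂ * mink v v = 0 := by
    have hne : 2 * (a₃ * b₂ - a₂ * b₃) * (a₁ * b₃ - a₃ * b₁) ≠ 0 :=
      mul_ne_zero (mul_ne_zero two_ne_zero h32) hd13
    rcases mul_eq_zero.mp key with h | h
    · exact absurd h hne
    · exact h
  -- the form vanishes identically on the plane
  have hA : mink u u = 0 := by
    have k : (a₁ * b₂ - a₂ * b₁) ^ 2 * mink u u = 0 := by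
      linear_combination b₂ ^ 2 * hn₁ + b₁ ^ 2 * hn₂ - 2 * b₁ * b₂ * hP
    rcases mul_eq_zero.mp k with h | h
    · exact absurd h (pow_ne_zero _ hd12)
    · exact h
  have hC : mink v v = 0 := by
    have k : (a₁ * b₂ - a₂ * b₁) ^ 2 * mink v v = 0 := by
      linear_combination a₂ ^ 2 * hn₁ + a₁ ^ 2 * hn₂ - 2 * a₁ * a₂ * hP
    rcases mul_eq_zero.mp k with h | h
    · exact absurd h (pow_ne_zero _ hd12)
    · exact h
  have hB : mink u v = 0 := by
    have k : (a₁ * b₂ - a₂ * b₁) ^ 2 * mink u v = 0 := by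
      linear_combination (-(a₂ * b₂)) * hn₁ + (-(a₁ * b₁)) * hn₂ + (a₁ * b₂ + a₂ * b₁) * hP
    rcases mul_eq_zero.mp k with h | h
    · exact absurd h (pow_ne_zero _ hd12)
    · exact h
  -- now u and v are parallel, contradicting the nonzero determinants
  by_cases hu : u = 0
  · subst hu
    have hb₁ : b₁ ≠ 0 := by
      intro h
      exact hw₁ (by simp [h])
    exact hc12 (b₂ / b₁) (by
      simp only [smul_zero, zero_add]
      rw [smul_smul, div_mul_cancel₀ _ hb₁])
  · have hu0 : u 0 ≠ 0 := fun h => hu (null_time_zero u h hA)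
    have hpnull : mink ((v 0) • u + (-(u 0)) • v) ((v 0) • u + (-(u 0)) • v) = 0 := by
      rw [mink_expand, hA, hB, hC]; ring
    have hp0 : ((v 0) • u + (-(u 0)) • v) 0 = 0 := by
      simp only [Pi.add_apply, Pi.smul_apply, smul_eq_mul]; ring
    have hp : (v 0) • u + (-(u 0)) • v = 0 := null_time_zero _ hp0 hpnull
    have h2 : (u 0) • v = (v 0) • u := by
      have : (v 0) • u - (u 0) • v = 0 := by
        simpa [sub_eq_add_neg, neg_smul] using hp
      exact (sub_eq_zero.mp this).symm
    obtain ⟨c, hv⟩ : ∃ c : ℝ, v = c • u := by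
      refine ⟨v 0 / u 0, ?_⟩
      calc v = (u 0)⁻¹ • ((u 0) • v) := by rw [smul_smul, inv_mul_cancel₀ hu0, one_smul]
        _ = (v 0 / u 0) • u := by rw [h2, smul_smul, inv_mul_eq_div]
    have e₁ : a₁ • u + b₁ • v = (a₁ + b₁ * c) • u := by
      rw [hv, smul_smul, add_smul]
    have e₂ : a₂ • u + b₂ • v = (a₂ + b₂ * c) • u := by
      rw [hv, smul_smul, add_smul]
    have hc₁ : a₁ + b₁ * c ≠ 0 := by
      intro h
      apply hw₁
      rw [e₁, h, zero_smul]
    exact hc12 ((a₂ + b₂ * c) / (a₁ + b₁ * c)) (by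
      rw [e₂, e₁, smul_smul, div_mul_cancel₀ _ hc₁])
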